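/- arXiv:cs/0406061 — 6 statements merged into one kernel-verified Lean document; each statement's English description precedes it below -/
import Mathlib

section
/- Let ε > 0 and δ > 0. Suppose a partition P of Ω refines the level-set partition Θ_Q of E_Q, and suppose μ({ω : |E_P(ω) − E_Q(ω)| > ε}) ≥ δ. Then ‖E_P‖₂² > ‖E_Q‖₂² + δε². -/
open scoped Classical BigOperators

/-- A partition of a finite type, given by the cell containing each point. -/
structure FinPartition (Ω : Type*) [Fintype Ω] [DecidableEq Ω] where
  cell : Ω → Finset Ω
  mem_cell : ∀ ω, ω ∈ cell ω
  cell_eq : ∀ ω ω', ω' ∈ cell ω → cell ω' = cell ω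

variable {Ω : Type*} [Fintype Ω] [DecidableEq Ω]

/-- Conditional expectation `E[g | S]` of `g` over `S` under the weights `μ`. -/
noncomputable def condExp (μ g : Ω → ℝ) (S : Finset Ω) : ℝ :=
  (∑ ω ∈ S, μ ω * g ω) / ∑ ω ∈ S, μ ω

/-- `E_P(ω) = E[f | P(ω)]`, the partition-conditional expectation of `f`. -/
noncomputable def expOn (μ f : Ω → ℝ) (P : FinPartition Ω) (ω : Ω) : ℝ :=
  condExp μ f (P.cell ω)

/-- The cell `Θ_P(ω) = {ω' : E_P(ω') = E_P(ω)}` of the level-set partition of `E_P`. -/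
noncomputable def levelCell (μ f : Ω → ℝ) (P : FinPartition Ω) (ω : Ω) : Finset Ω :=
  Finset.univ.filter fun ω' => expOn μ f P ω' = expOn μ f P ω

/-- `P` refines `Q`: every cell of `P` is contained in the corresponding cell of `Q`. -/
def FinPartition.Refines (P Q : FinPartition Ω) : Prop := ∀ ω, P.cell ω ⊆ Q.cell ω

/-- The squared 2-norm `‖F‖₂² = Σ_ω μ(ω) F(ω)²`. -/
noncomputable def norm2 (μ F : Ω → ℝ) : ℝ := ∑ ω, μ ω * F ω ^ 2

/-! `E_Q` is constant on the cells of `Q`, and also on those of `P` because `P` refines the level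
sets of `E_Q`. Hence both `f - E_P` and `f - E_Q` are orthogonal to `E_Q`, and so is their
difference `E_P - E_Q`. Pythagoras gives `‖E_P‖₂² = ‖E_Q‖₂² + ‖E_P - E_Q‖₂²`, and by Chebyshev
the last term exceeds `δ ε²`. -/

open Finset

namespace FinPartition

variable (P : FinPartition Ω)

lemma mem_cell_iff_cell_eq {ω ω₀ : Ω} : ω ∈ P.cell ω₀ ↔ P.cell ω = P.cell ω₀ :=
  ⟨P.cell_eq _ _, fun h => h ▸ P.mem_cell ω⟩

lemma filter_cell_eq (ω₀ : Ω) : univ.filter (fun ω => P.cell ω = P.cell ω₀) = P.cell ω₀ := by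
  ext ω
  simp [P.mem_cell_iff_cell_eq]

end FinPartition

omit [Fintype Ω] [DecidableEq Ω] in
lemma sum_mul_condExp {μ : Ω → ℝ} (f : Ω → ℝ) {S : Finset Ω} (hS : ∑ ω ∈ S, μ ω ≠ 0) :
    ∑ ω ∈ S, μ ω * condExp μ f S = ∑ ω ∈ S, μ ω * f ω := by
  rw [← sum_mul, condExp, mul_div_cancel₀ _ hS]

lemma expOn_eq_of_mem_cell (μ f : Ω → ℝ) (P : FinPartition Ω) {ω ω' : Ω} (h : ω' ∈ P.cell ω) :
    expOn μ f P ω' = expOn μ f P ω := by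
  rw [expOn, expOn, P.cell_eq ω ω' h]

lemma sum_cell_mul_sub_expOn {μ : Ω → ℝ} (hμ : ∀ ω, 0 < μ ω) (f : Ω → ℝ) (P : FinPartition Ω)
    (ω₀ : Ω) : ∑ ω ∈ P.cell ω₀, μ ω * (f ω - expOn μ f P ω) = 0 := by
  have hmass : ∑ ω ∈ P.cell ω₀, μ ω ≠ 0 :=
    (sum_pos (fun ω _ => hμ ω) ⟨ω₀, P.mem_cell ω₀⟩).ne'
  rw [sum_congr rfl fun ω hω => by rw [expOn_eq_of_mem_cell μ f P hω, mul_sub],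
    sum_sub_distrib, expOn, sum_mul_condExp f hmass, sub_self]

lemma sum_mul_sub_expOn_eq_zero {μ : Ω → ℝ} (hμ : ∀ ω, 0 < μ ω) (f h : Ω → ℝ)
    (P : FinPartition Ω) (hh : ∀ ω, ∀ ω' ∈ P.cell ω, h ω' = h ω) :
    ∑ ω, μ ω * (h ω * (f ω - expOn μ f P ω)) = 0 := by
  rw [← sum_fiberwise_of_maps_to (g := P.cell) (t := univ.image P.cell)
    (fun ω _ => mem_image_of_mem _ (mem_univ ω))]
  refine sum_eq_zero fun c hc => ?_
  obtain ⟨ω₀, -, rfl⟩ := mem_image.mp hc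
  calc ∑ ω ∈ univ.filter (fun ω => P.cell ω = P.cell ω₀), μ ω * (h ω * (f ω - expOn μ f P ω))
      = h ω₀ * ∑ ω ∈ P.cell ω₀, μ ω * (f ω - expOn μ f P ω) := by
        rw [P.filter_cell_eq, mul_sum]
        exact sum_congr rfl fun ω hω => by rw [hh ω₀ ω hω]; ring
    _ = 0 := by rw [sum_cell_mul_sub_expOn hμ, mul_zero]

omit [DecidableEq Ω] in
lemma norm2_eq_add_norm2_sub {μ F G : Ω → ℝ} (h : ∑ ω, μ ω * (G ω * (F ω - G ω)) = 0) :
    norm2 μ F = norm2 μ G + norm2 μ (F - G) := by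
  have hpoint : ∀ ω, μ ω * F ω ^ 2
      = μ ω * G ω ^ 2 + μ ω * (F - G) ω ^ 2 + 2 * (μ ω * (G ω * (F ω - G ω))) := fun ω => by
    rw [Pi.sub_apply]
    ring
  simp only [norm2, sum_congr rfl fun ω _ => hpoint ω, sum_add_distrib, ← mul_sum, h]
  ring

omit [DecidableEq Ω] in
lemma mul_sq_lt_norm2 {μ F : Ω → ℝ} (hμ : ∀ ω, 0 < μ ω) {ε δ : ℝ} (hε : 0 ≤ ε) (hδ : 0 < δ)
    (hF : δ ≤ ∑ ω ∈ univ.filter (fun ω => ε < |F ω|), μ ω) : δ * ε ^ 2 < norm2 μ F := by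
  set S := univ.filter (fun ω => ε < |F ω|)
  have hS : S.Nonempty := by
    by_contra hempty
    rw [not_nonempty_iff_eq_empty.mp hempty, sum_empty] at hF
    linarith
  calc δ * ε ^ 2 ≤ ∑ ω ∈ S, μ ω * ε ^ 2 := by
        rw [← sum_mul]
        exact mul_le_mul_of_nonneg_right hF (sq_nonneg ε)
    _ < ∑ ω ∈ S, μ ω * F ω ^ 2 := by
        refine sum_lt_sum_of_nonempty hS fun ω hω => mul_lt_mul_of_pos_left ?_ (hμ ω)
        rw [← sq_abs (F ω)]
        exact pow_lt_pow_left₀ (mem_filter.mp hω).2 hε two_ne_zero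
    _ ≤ norm2 μ F :=
        sum_le_sum_of_subset_of_nonneg (subset_univ S)
          fun ω _ _ => mul_nonneg (hμ ω).le (sq_nonneg _)

theorem stmt_2_general (μ f : Ω → ℝ)
    (hμpos : ∀ ω, 0 < μ ω)
    (ε δ : ℝ) (hε : 0 < ε) (hδ : 0 < δ)
    (P Q : FinPartition Ω)
    (hrefine : ∀ ω, P.cell ω ⊆ levelCell μ f Q ω)
    (hdisagree : δ ≤ ∑ ω ∈ Finset.univ.filter
        (fun ω => ε < |expOn μ f P ω - expOn μ f Q ω|), μ ω) :
    norm2 μ (expOn μ f Q) + δ * ε ^ 2 < norm2 μ (expOn μ f P) := by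
  have horthP := sum_mul_sub_expOn_eq_zero hμpos f (expOn μ f Q) P
    fun ω _ hω => (mem_filter.mp (hrefine ω hω)).2
  have horthQ := sum_mul_sub_expOn_eq_zero hμpos f (expOn μ f Q) Q
    fun _ _ => expOn_eq_of_mem_cell μ f Q
  have horth : ∑ ω, μ ω * (expOn μ f Q ω * (expOn μ f P ω - expOn μ f Q ω)) = 0 := by
    rw [← sub_self (0 : ℝ)]
    nth_rewrite 1 [← horthQ]
    rw [← horthP, ← sum_sub_distrib]
    exact sum_congr rfl fun ω _ => by ring
  rw [norm2_eq_add_norm2_sub horth]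
  linarith [mul_sq_lt_norm2 (F := expOn μ f P - expOn μ f Q) hμpos hε.le hδ hdisagree]

theorem stmt_2 [Nonempty Ω] (μ f : Ω → ℝ)
    (hμpos : ∀ ω, 0 < μ ω) (hμsum : ∑ ω, μ ω = 1)
    (ε δ : ℝ) (hε : 0 < ε) (hδ : 0 < δ)
    (P Q : FinPartition Ω)
    (hrefine : ∀ ω, P.cell ω ⊆ levelCell μ f Q ω)
    (hdisagree : δ ≤ ∑ ω ∈ Finset.univ.filter
        (fun ω => ε < |expOn μ f P ω - expOn μ f Q ω|), μ ω) :
    norm2 μ (expOn μ f Q) + δ * ε ^ 2 < norm2 μ (expOn μ f P) :=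
  stmt_2_general μ f hμpos ε δ hε hδ P Q hrefine hdisagree
end

section
/- For every finite state space Ω with full-support prior μ, every f : Ω → [0,1], every pair of initial partitions Π_{A,0}, Π_{B,0}, and every ε ∈ (0,1) and δ ∈ (0,1], there exists a natural number t ≤ 1/(δε²) such that after t messages of the standard protocol, Alice and Bob (ε,δ)-agree: μ({ω : |E_{A,t}(ω) − E_{B,t}(ω)| > ε}) ≤ δ. -/
open scoped Classical BigOperators

variable {Ω : Type*} [Fintype Ω] [DecidableEq Ω]

/-- Refine a partition by intersecting each cell with the level sets of `g`. -/
noncomputable def FinPartition.refineBy {M : Type*} (R : FinPartition Ω) (g : Ω → M) :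
    FinPartition Ω where
  cell ω := R.cell ω ∩ Finset.univ.filter fun ω' => g ω' = g ω
  mem_cell ω := by
    simp only [Finset.mem_inter, Finset.mem_filter, Finset.mem_univ, true_and]
    exact ⟨R.mem_cell ω, trivial⟩
  cell_eq := by
    intro ω ω' h
    simp only [Finset.mem_inter, Finset.mem_filter, Finset.mem_univ, true_and] at h
    show R.cell ω' ∩ Finset.univ.filter (fun ω'' => g ω'' = g ω') =
      R.cell ω ∩ Finset.univ.filter (fun ω'' => g ω'' = g ω)
    rw [R.cell_eq ω ω' h.1, h.2]

/-- The standard protocol: the pair of Alice's and Bob's partitions after `t` messages.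
At odd steps Alice announces her current expectation of `f` (refining Bob's partition),
at even steps Bob announces his. -/
noncomputable def stdPair (μ f : Ω → ℝ) (PA PB : FinPartition Ω) :
    ℕ → FinPartition Ω × FinPartition Ω
  | 0 => (PA, PB)
  | t + 1 =>
    let p := stdPair μ f PA PB t
    if (t + 1) % 2 = 1 then (p.1, p.2.refineBy (expOn μ f p.1))
    else (p.1.refineBy (expOn μ f p.2), p.2)


section Aux

variable (μ f : Ω → ℝ)

lemma cell_sum_pos (hμ : ∀ ω, 0 < μ ω) (P : FinPartition Ω) (ω : Ω) :
    0 < ∑ ω' ∈ P.cell ω, μ ω' :=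
  Finset.sum_pos (fun i _ => hμ i) ⟨ω, P.mem_cell ω⟩

lemma expOn_eq_of_mem (P : FinPartition Ω) {ω ω' : Ω} (h : ω' ∈ P.cell ω) :
    expOn μ f P ω' = expOn μ f P ω := by
  unfold expOn
  rw [P.cell_eq ω ω' h]

lemma sum_cells (P : FinPartition Ω) (F : Ω → ℝ) :
    ∑ C ∈ Finset.univ.image P.cell, ∑ ω ∈ C, F ω = ∑ ω, F ω := by
  rw [← Finset.sum_fiberwise_of_maps_to (g := P.cell)
      (fun ω _ => Finset.mem_image_of_mem _ (Finset.mem_univ ω)) F]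
  refine Finset.sum_congr rfl fun C hC => ?_
  obtain ⟨ω₀, -, rfl⟩ := Finset.mem_image.mp hC
  refine Finset.sum_congr ?_ fun _ _ => rfl
  ext ω
  simp only [Finset.mem_filter, Finset.mem_univ, true_and]
  constructor
  · exact P.cell_eq ω₀ ω
  · intro h; exact h ▸ P.mem_cell ω

lemma sum_mul_expOn (hμ : ∀ ω, 0 < μ ω) (P : FinPartition Ω) (h : Ω → ℝ)
    (hconst : ∀ ω ω', ω' ∈ P.cell ω → h ω' = h ω) :
    ∑ ω, μ ω * (h ω * expOn μ f P ω) = ∑ ω, μ ω * (h ω * f ω) := by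
  rw [← sum_cells P, ← sum_cells P]
  refine Finset.sum_congr rfl fun C hC => ?_
  obtain ⟨ω₀, -, rfl⟩ := Finset.mem_image.mp hC
  calc ∑ ω ∈ P.cell ω₀, μ ω * (h ω * expOn μ f P ω)
      = ∑ ω ∈ P.cell ω₀, μ ω * (h ω₀ * condExp μ f (P.cell ω₀)) := by
        refine Finset.sum_congr rfl fun ω hω => ?_
        rw [hconst ω₀ ω hω, expOn_eq_of_mem μ f P hω]
        rfl
    _ = h ω₀ * ((∑ ω ∈ P.cell ω₀, μ ω * f ω) / (∑ ω ∈ P.cell ω₀, μ ω)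
          * (∑ ω ∈ P.cell ω₀, μ ω)) := by
        rw [← Finset.sum_mul]; unfold condExp; ring
    _ = ∑ ω ∈ P.cell ω₀, μ ω * (h ω * f ω) := by
        rw [div_mul_cancel₀ _ (cell_sum_pos μ hμ P ω₀).ne', Finset.mul_sum]
        refine Finset.sum_congr rfl fun ω hω => ?_
        rw [hconst ω₀ ω hω]; ring

lemma norm2_expOn_eq (hμ : ∀ ω, 0 < μ ω) (P : FinPartition Ω) :
    norm2 μ (expOn μ f P) = ∑ ω, μ ω * (expOn μ f P ω * f ω) := by
  unfold norm2
  rw [← sum_mul_expOn μ f hμ P (expOn μ f P) (fun ω ω' h => expOn_eq_of_mem μ f P h)]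
  exact Finset.sum_congr rfl fun ω _ => by ring

lemma cross_eq (hμ : ∀ ω, 0 < μ ω) (S R : FinPartition Ω)
    (hconst : ∀ ω ω', ω' ∈ R.cell ω → expOn μ f S ω' = expOn μ f S ω) :
    ∑ ω, μ ω * (expOn μ f S ω * expOn μ f R ω) = norm2 μ (expOn μ f S) := by
  rw [sum_mul_expOn μ f hμ R _ hconst, norm2_expOn_eq μ f hμ S]

lemma step_eq (hμ : ∀ ω, 0 < μ ω) (S R : FinPartition Ω)
    (hconst : ∀ ω ω', ω' ∈ R.cell ω → expOn μ f S ω' = expOn μ f S ω) :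
    ∑ ω, μ ω * (expOn μ f S ω - expOn μ f R ω) ^ 2
      = norm2 μ (expOn μ f R) - norm2 μ (expOn μ f S) := by
  have h1 := cross_eq μ f hμ S R hconst
  have expand : ∑ ω, μ ω * (expOn μ f S ω - expOn μ f R ω) ^ 2
      = norm2 μ (expOn μ f S) + norm2 μ (expOn μ f R)
        - 2 * ∑ ω, μ ω * (expOn μ f S ω * expOn μ f R ω) := by
    unfold norm2
    rw [Finset.mul_sum, ← Finset.sum_add_distrib, ← Finset.sum_sub_distrib]
    exact Finset.sum_congr rfl fun ω _ => by ring
  rw [expand, h1]; ring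

lemma step_le (hμ : ∀ ω, 0 < μ ω) (S R : FinPartition Ω)
    (hconst : ∀ ω ω', ω' ∈ R.cell ω → expOn μ f S ω' = expOn μ f S ω) :
    norm2 μ (expOn μ f S) ≤ norm2 μ (expOn μ f R) := by
  have h := step_eq μ f hμ S R hconst
  have h2 : 0 ≤ ∑ ω, μ ω * (expOn μ f S ω - expOn μ f R ω) ^ 2 :=
    Finset.sum_nonneg fun ω _ => mul_nonneg (hμ ω).le (sq_nonneg _)
  linarith

lemma expOn_mem (hμ : ∀ ω, 0 < μ ω) (hf : ∀ ω, f ω ∈ Set.Icc (0 : ℝ) 1)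
    (P : FinPartition Ω) (ω : Ω) : expOn μ f P ω ∈ Set.Icc (0 : ℝ) 1 := by
  have hpos := cell_sum_pos μ hμ P ω
  constructor
  · exact div_nonneg (Finset.sum_nonneg fun i _ => mul_nonneg (hμ i).le (hf i).1) hpos.le
  · show (∑ ω' ∈ P.cell ω, μ ω' * f ω') / (∑ ω' ∈ P.cell ω, μ ω') ≤ 1
    rw [div_le_one hpos]
    exact Finset.sum_le_sum fun i _ => mul_le_of_le_one_right (hμ i).le (hf i).2

lemma norm2_expOn_le (hμ : ∀ ω, 0 < μ ω) (hf : ∀ ω, f ω ∈ Set.Icc (0 : ℝ) 1)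
    (P : FinPartition Ω) : norm2 μ (expOn μ f P) ≤ ∑ ω, μ ω * f ω := by
  rw [norm2_expOn_eq μ f hμ P]
  refine Finset.sum_le_sum fun ω _ => ?_
  have h1 := expOn_mem μ f hμ hf P ω
  have h2 := hf ω
  have : expOn μ f P ω * f ω ≤ 1 * f ω :=
    mul_le_mul_of_nonneg_right h1.2 h2.1
  nlinarith [(hμ ω).le]

lemma sum_mul_expOn' (hμ : ∀ ω, 0 < μ ω) (P : FinPartition Ω) :
    ∑ ω, μ ω * expOn μ f P ω = ∑ ω, μ ω * f ω := by
  have h := sum_mul_expOn μ f hμ P (fun _ => 1) (fun _ _ _ => rfl)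
  simpa using h

lemma sum_sq_sub_const (g : Ω → ℝ) (c : ℝ) :
    ∑ ω, μ ω * (g ω - c) ^ 2
      = (∑ ω, μ ω * g ω ^ 2) - 2 * c * (∑ ω, μ ω * g ω) + c ^ 2 * ∑ ω, μ ω := by
  rw [Finset.mul_sum, Finset.mul_sum, ← Finset.sum_sub_distrib, ← Finset.sum_add_distrib]
  exact Finset.sum_congr rfl fun ω _ => by ring

lemma norm2_expOn_ge (hμ : ∀ ω, 0 < μ ω) (hμsum : ∑ ω, μ ω = 1)
    (P : FinPartition Ω) : (∑ ω, μ ω * f ω) ^ 2 ≤ norm2 μ (expOn μ f P) := by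
  have hEsum : ∑ ω, μ ω * expOn μ f P ω = ∑ ω, μ ω * f ω := sum_mul_expOn' μ f hμ P
  have hnn : 0 ≤ ∑ ω, μ ω * (expOn μ f P ω - ∑ ω', μ ω' * f ω') ^ 2 :=
    Finset.sum_nonneg fun ω _ => mul_nonneg (hμ ω).le (sq_nonneg _)
  rw [sum_sq_sub_const μ (expOn μ f P) (∑ ω', μ ω' * f ω'), hEsum, hμsum] at hnn
  unfold norm2
  nlinarith

lemma disag_le (hμ : ∀ ω, 0 < μ ω) {ε : ℝ} (hε0 : 0 < ε) (g1 g2 : Ω → ℝ) :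
    ε ^ 2 * ∑ ω ∈ Finset.univ.filter (fun ω => ε < |g1 ω - g2 ω|), μ ω
      ≤ ∑ ω, μ ω * (g1 ω - g2 ω) ^ 2 := by
  rw [Finset.mul_sum]
  refine le_trans (Finset.sum_le_sum ?_)
    (Finset.sum_le_sum_of_subset_of_nonneg (Finset.filter_subset _ _) ?_)
  · intro ω hω
    simp only [Finset.mem_filter] at hω
    have h2 : ε ^ 2 ≤ (g1 ω - g2 ω) ^ 2 := by
      rw [← sq_abs (g1 ω - g2 ω)]
      exact pow_le_pow_left₀ hε0.le hω.2.le 2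
    nlinarith [(hμ ω).le]
  · intro ω _ _
    exact mul_nonneg (hμ ω).le (sq_nonneg _)

lemma refineBy_spec {M : Type*} (R : FinPartition Ω) (g : Ω → M) {ω ω' : Ω}
    (h : ω' ∈ (R.refineBy g).cell ω) : g ω' = g ω := by
  have h2 : ω' ∈ R.cell ω ∩ Finset.univ.filter fun ω'' => g ω'' = g ω := h
  simp only [Finset.mem_inter, Finset.mem_filter, Finset.mem_univ, true_and] at h2
  exact h2.2

lemma stdPair_succ (PA PB : FinPartition Ω) (t : ℕ) :
    stdPair μ f PA PB (t + 1) =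
      if (t + 1) % 2 = 1 then
        ((stdPair μ f PA PB t).1,
          (stdPair μ f PA PB t).2.refineBy (expOn μ f (stdPair μ f PA PB t).1))
      else
        ((stdPair μ f PA PB t).1.refineBy (expOn μ f (stdPair μ f PA PB t).2),
          (stdPair μ f PA PB t).2) := by
  rw [stdPair]

/-- The 2-norm of the expectation of the player who sent the last message. -/
noncomputable def senderNorm (PA PB : FinPartition Ω) (t : ℕ) : ℝ :=
  if t % 2 = 1 then norm2 μ (expOn μ f (stdPair μ f PA PB t).1)
  else norm2 μ (expOn μ f (stdPair μ f PA PB t).2)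

lemma key_ineq (hμ : ∀ ω, 0 < μ ω) {ε : ℝ} (hε0 : 0 < ε) (PA PB : FinPartition Ω) (t : ℕ)
    (ht : 1 ≤ t) :
    ε ^ 2 * ∑ ω ∈ Finset.univ.filter (fun ω =>
        ε < |expOn μ f (stdPair μ f PA PB t).1 ω - expOn μ f (stdPair μ f PA PB t).2 ω|), μ ω
      ≤ (if t % 2 = 1 then
          norm2 μ (expOn μ f (stdPair μ f PA PB t).2)
            - norm2 μ (expOn μ f (stdPair μ f PA PB t).1)
        else
          norm2 μ (expOn μ f (stdPair μ f PA PB t).1)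
            - norm2 μ (expOn μ f (stdPair μ f PA PB t).2)) := by
  obtain ⟨s, rfl⟩ : ∃ s, t = s + 1 := ⟨t - 1, by omega⟩
  set p := stdPair μ f PA PB s with hp
  have hd := disag_le μ hμ hε0 (expOn μ f (stdPair μ f PA PB (s+1)).1)
      (expOn μ f (stdPair μ f PA PB (s+1)).2)
  rcases Nat.even_or_odd (s + 1) with he | ho
  · have h2 : (s + 1) % 2 = 0 := Nat.even_iff.mp he
    have hPt : stdPair μ f PA PB (s+1) = (p.1.refineBy (expOn μ f p.2), p.2) := by
      rw [stdPair_succ, if_neg (by omega)]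
    rw [if_neg (by omega)]
    have hconst : ∀ ω ω', ω' ∈ (stdPair μ f PA PB (s+1)).1.cell ω →
        expOn μ f (stdPair μ f PA PB (s+1)).2 ω' = expOn μ f (stdPair μ f PA PB (s+1)).2 ω := by
      intro ω ω' hω'
      rw [hPt] at hω' ⊢
      exact refineBy_spec _ _ hω'
    have hs := step_eq μ f hμ (stdPair μ f PA PB (s+1)).2 (stdPair μ f PA PB (s+1)).1 hconst
    have heq : ∑ ω, μ ω * (expOn μ f (stdPair μ f PA PB (s+1)).1 ω
          - expOn μ f (stdPair μ f PA PB (s+1)).2 ω) ^ 2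
        = ∑ ω, μ ω * (expOn μ f (stdPair μ f PA PB (s+1)).2 ω
          - expOn μ f (stdPair μ f PA PB (s+1)).1 ω) ^ 2 :=
      Finset.sum_congr rfl fun ω _ => by ring
    rw [heq] at hd
    linarith [hd, hs.le, hs.ge]
  · have h2 : (s + 1) % 2 = 1 := Nat.odd_iff.mp ho
    have hPt : stdPair μ f PA PB (s+1) = (p.1, p.2.refineBy (expOn μ f p.1)) := by
      rw [stdPair_succ, if_pos h2]
    rw [if_pos h2]
    have hconst : ∀ ω ω', ω' ∈ (stdPair μ f PA PB (s+1)).2.cell ω →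
        expOn μ f (stdPair μ f PA PB (s+1)).1 ω' = expOn μ f (stdPair μ f PA PB (s+1)).1 ω := by
      intro ω ω' hω'
      rw [hPt] at hω' ⊢
      exact refineBy_spec _ _ hω'
    have hs := step_eq μ f hμ (stdPair μ f PA PB (s+1)).1 (stdPair μ f PA PB (s+1)).2 hconst
    linarith [hd, hs.le, hs.ge]

lemma senderNorm_step (hμ : ∀ ω, 0 < μ ω) {ε δ : ℝ} (hε0 : 0 < ε) (hδ0 : 0 < δ)
    (PA PB : FinPartition Ω) (t : ℕ) (ht : 1 ≤ t)
    (hfail : δ < ∑ ω ∈ Finset.univ.filter (fun ω =>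
        ε < |expOn μ f (stdPair μ f PA PB t).1 ω - expOn μ f (stdPair μ f PA PB t).2 ω|), μ ω) :
    senderNorm μ f PA PB t + δ * ε ^ 2 ≤ senderNorm μ f PA PB (t + 1) := by
  have hk := key_ineq μ f hμ hε0 PA PB t ht
  have hδε : δ * ε ^ 2 < ε ^ 2 * ∑ ω ∈ Finset.univ.filter (fun ω =>
      ε < |expOn μ f (stdPair μ f PA PB t).1 ω - expOn μ f (stdPair μ f PA PB t).2 ω|), μ ω := by
    have hε2 : 0 < ε ^ 2 := by positivity
    nlinarith
  rcases Nat.even_or_odd t with he | ho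
  · have h2 : t % 2 = 0 := Nat.even_iff.mp he
    have h3 : (t + 1) % 2 = 1 := by omega
    rw [if_neg (by omega)] at hk
    have hPt : stdPair μ f PA PB (t+1)
        = ((stdPair μ f PA PB t).1, (stdPair μ f PA PB t).2.refineBy
            (expOn μ f (stdPair μ f PA PB t).1)) := by
      rw [stdPair_succ, if_pos h3]
    have hA1 : (stdPair μ f PA PB (t+1)).1 = (stdPair μ f PA PB t).1 := by rw [hPt]
    unfold senderNorm
    rw [if_neg (by omega), if_pos h3, hA1]
    linarith
  · have h2 : t % 2 = 1 := Nat.odd_iff.mp ho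
    have h3 : (t + 1) % 2 = 0 := by omega
    rw [if_pos h2] at hk
    have hPt : stdPair μ f PA PB (t+1)
        = ((stdPair μ f PA PB t).1.refineBy (expOn μ f (stdPair μ f PA PB t).2),
            (stdPair μ f PA PB t).2) := by
      rw [stdPair_succ, if_neg (by omega)]
    have hB1 : (stdPair μ f PA PB (t+1)).2 = (stdPair μ f PA PB t).2 := by rw [hPt]
    unfold senderNorm
    rw [if_pos h2, if_neg (by omega), hB1]
    linarith

lemma senderNorm_chain (hμ : ∀ ω, 0 < μ ω) {ε δ : ℝ} (hε0 : 0 < ε) (hδ0 : 0 < δ)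
    (PA PB : FinPartition Ω) (n : ℕ)
    (hfail : ∀ s, 1 ≤ s → s ≤ n → δ < ∑ ω ∈ Finset.univ.filter (fun ω =>
        ε < |expOn μ f (stdPair μ f PA PB s).1 ω - expOn μ f (stdPair μ f PA PB s).2 ω|), μ ω) :
    senderNorm μ f PA PB 1 + n * (δ * ε ^ 2) ≤ senderNorm μ f PA PB (n + 1) := by
  induction n with
  | zero => simp
  | succ n ih =>
    have h1 := ih (fun s hs1 hs2 => hfail s hs1 (by omega))
    have h2 := senderNorm_step μ f hμ hε0 hδ0 PA PB (n + 1) (by omega)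
      (hfail (n + 1) (by omega) le_rfl)
    push_cast
    push_cast at h1
    linarith

end Aux

theorem stmt_3 [Nonempty Ω] (μ : Ω → ℝ) (f : Ω → ℝ)
    (hμpos : ∀ ω, 0 < μ ω) (hμsum : ∑ ω, μ ω = 1)
    (hf : ∀ ω, f ω ∈ Set.Icc (0 : ℝ) 1)
    (PA PB : FinPartition Ω)
    (ε δ : ℝ) (hε : ε ∈ Set.Ioo (0 : ℝ) 1) (hδ : δ ∈ Set.Ioc (0 : ℝ) 1) :
    ∃ t : ℕ, (t : ℝ) ≤ 1 / (δ * ε ^ 2) ∧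
      ∑ ω ∈ Finset.univ.filter (fun ω =>
          ε < |expOn μ f (stdPair μ f PA PB t).1 ω - expOn μ f (stdPair μ f PA PB t).2 ω|),
        μ ω ≤ δ := by
  obtain ⟨hε0, hε1⟩ := hε
  obtain ⟨hδ0, hδ1⟩ := hδ
  have hε2 : 0 < ε ^ 2 := by positivity
  have hδε : 0 < δ * ε ^ 2 := by positivity
  have hδε1 : δ * ε ^ 2 < 1 := by nlinarith
  by_contra hcon
  push_neg at hcon
  set x : ℝ := 1 / (δ * ε ^ 2) with hx
  have hx1 : 1 < x := by
    rw [hx, lt_div_iff₀ hδε]; linarith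
  have hxmul : x * (δ * ε ^ 2) = 1 := by
    rw [hx]; field_simp
  set T : ℕ := ⌊x⌋₊ with hT
  have hT1 : 1 ≤ T := Nat.le_floor (by exact_mod_cast hx1.le)
  have hTle : (T : ℝ) ≤ x := Nat.floor_le (by linarith)
  have hTgt : x < (T : ℝ) + 1 := Nat.lt_floor_add_one x
  have hfail : ∀ s, 1 ≤ s → s ≤ T → δ < ∑ ω ∈ Finset.univ.filter (fun ω =>
      ε < |expOn μ f (stdPair μ f PA PB s).1 ω - expOn μ f (stdPair μ f PA PB s).2 ω|), μ ω := by
    intro s _ hs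
    exact hcon s (le_trans (by exact_mod_cast Nat.cast_le.mpr hs) hTle)
  have hchain := senderNorm_chain μ f hμpos hε0 hδ0 PA PB T hfail
  -- bounds on senderNorm
  set c : ℝ := ∑ ω, μ ω * f ω with hc
  have hub : senderNorm μ f PA PB (T + 1) ≤ c := by
    unfold senderNorm
    split_ifs
    · exact norm2_expOn_le μ f hμpos hf _
    · exact norm2_expOn_le μ f hμpos hf _
  have hlb : c ^ 2 ≤ senderNorm μ f PA PB 1 := by
    unfold senderNorm
    split_ifs
    · exact norm2_expOn_ge μ f hμpos hμsum _
    · exact norm2_expOn_ge μ f hμpos hμsum _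
  -- T * (δ ε²) ≥ 1/2
  have hTbig : (1 : ℝ) / 2 ≤ (T : ℝ) * (δ * ε ^ 2) := by
    have h1 : (1 : ℝ) ≤ (T : ℝ) := by exact_mod_cast hT1
    nlinarith [hTgt, hxmul, hδε]
  have hcrange : c - c ^ 2 ≤ 1 / 4 := by nlinarith [sq_nonneg (2 * c - 1)]
  linarith
end

section
/- Let n ≥ 1 and ε > 0, let x = (x₁,…,x_n) and y = (y₁,…,y_n) be independent and uniformly distributed on {−1,1}ⁿ, set y₀ := 1, and let F(x,y) = 1/2 + 2ε·Σ_{i=1}^{n}(y_{i−1}x_i + x_i y_i). Then for every j with 0 ≤ j < n: (a) E[F | x, y₁,…,y_j] = 1/2 + 2ε·(Σ_{i=1}^{j}(y_{i−1}x_i + x_i y_i) + y_j x_{j+1}); (b) E[F | y, x₁,…,x_{j+1}] = 1/2 + 2ε·Σ_{i=1}^{j+1}(y_{i−1}x_i + x_i y_i); (c) the difference E[F | y, x₁,…,x_{j+1}] − E[F | x, y₁,…,y_j] equals 2ε·x_{j+1}y_{j+1}, and hence has absolute value exactly 2ε for every (x,y). Thus, under the standard protocol applied to F, Alice's and Bob's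 expectations differ by exactly 2ε at every step t < 2n. -/
/-!
Statement 6: explicit computation of Alice's and Bob's conditional expectations of
`F(x,y) = 1/2 + 2ε Σ_{i=1}^n (y_{i-1} x_i + x_i y_i)` (with `y₀ = 1`) on the uniform
hypercube, after partial exchange of bits.
-/

open scoped Classical BigOperators

/-- `±1` value of a Boolean. -/
noncomputable def sgn (b : Bool) : ℝ := if b then 1 else -1

/-- `x_k` for `k = 1, …, n` (1-indexed). -/
noncomputable def xv (n : ℕ) (x : Fin n → Bool) (k : ℕ) : ℝ :=
  if h : k - 1 < n then sgn (x ⟨k - 1, h⟩) else 1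

/-- `y_k` for `k = 0, 1, …, n`, with the convention `y₀ = 1`. -/
noncomputable def yv (n : ℕ) (y : Fin n → Bool) (k : ℕ) : ℝ :=
  if k = 0 then 1 else if h : k - 1 < n then sgn (y ⟨k - 1, h⟩) else 1

/-- `F(x,y) = 1/2 + 2ε Σ_{i=1}^n (y_{i-1} x_i + x_i y_i)`. -/
noncomputable def Fxy (n : ℕ) (ε : ℝ) (x y : Fin n → Bool) : ℝ :=
  1 / 2 + 2 * ε * ∑ k ∈ Finset.Icc 1 n,
    (yv n y (k - 1) * xv n x k + xv n x k * yv n y k)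

/-- Alice's conditional expectation of `F` given all of `x` and the first `j` bits of
`y`, under the uniform distribution. -/
noncomputable def condA (n : ℕ) (ε : ℝ) (j : ℕ) (x y : Fin n → Bool) : ℝ :=
  (∑ y' : Fin n → Bool,
      if (∀ i : Fin n, (i : ℕ) < j → y' i = y i) then Fxy n ε x y' else 0) /
  (∑ y' : Fin n → Bool,
      if (∀ i : Fin n, (i : ℕ) < j → y' i = y i) then (1 : ℝ) else 0)

/-- Bob's conditional expectation of `F` given all of `y` and the first `jj` bits of
`x`, under the uniform distribution. -/
noncomputable def condB (n : ℕ) (ε : ℝ) (jj : ℕ) (x y : Fin n → Bool) : ℝ :=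
  (∑ x' : Fin n → Bool,
      if (∀ i : Fin n, (i : ℕ) < jj → x' i = x i) then Fxy n ε x' y else 0) /
  (∑ x' : Fin n → Bool,
      if (∀ i : Fin n, (i : ℕ) < jj → x' i = x i) then (1 : ℝ) else 0)

lemma sgn_not (b : Bool) : sgn (!b) = - sgn b := by cases b <;> simp [sgn]

lemma abs_sgn (b : Bool) : |sgn b| = 1 := by cases b <;> simp [sgn]

lemma sum_agree_mul_sgn (n j : ℕ) (z : Fin n → Bool) (i : Fin n) (hi : j ≤ (i : ℕ)) (c : ℝ) :
    ∑ z' : Fin n → Bool,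
      (if (∀ t : Fin n, (t : ℕ) < j → z' t = z t) then c * sgn (z' i) else 0) = 0 := by
  apply Finset.sum_ninvolution (g := fun z' => Function.update z' i (!(z' i)))
  · intro z'
    have hne : ∀ t : Fin n, (t : ℕ) < j → t ≠ i := by
      intro t ht h; subst h; omega
    have hP : (∀ t : Fin n, (t : ℕ) < j → Function.update z' i (!(z' i)) t = z t) ↔
        (∀ t : Fin n, (t : ℕ) < j → z' t = z t) := by
      constructor
      · intro h t ht; have := h t ht; rwa [Function.update_of_ne (hne t ht)] at this
      · intro h t ht; rw [Function.update_of_ne (hne t ht)]; exact h t ht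
    by_cases hp : ∀ t : Fin n, (t : ℕ) < j → z' t = z t
    · rw [if_pos hp, if_pos (hP.mpr hp), Function.update_self, sgn_not]; ring
    · rw [if_neg hp, if_neg (fun h => hp (hP.mp h))]; ring
  · intro z' _ h
    have := congrFun h i
    rw [Function.update_self] at this
    exact (Bool.not_ne_self (z' i)) this
  · intro z'; exact Finset.mem_univ _
  · intro z'
    rw [Function.update_self, Function.update_idem, Bool.not_not, Function.update_eq_self]

lemma den_pos (n j : ℕ) (y : Fin n → Bool) :
    0 < ∑ y' : Fin n → Bool,
        (if (∀ t : Fin n, (t : ℕ) < j → y' t = y t) then (1 : ℝ) else 0) := by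
  apply Finset.sum_pos' (fun z' _ => by split <;> norm_num)
  exact ⟨y, Finset.mem_univ y, by simp⟩

lemma yv_agree (n j : ℕ) (y y' : Fin n → Bool)
    (hP : ∀ t : Fin n, (t : ℕ) < j → y' t = y t) (m : ℕ) (hm : m ≤ j) :
    yv n y' m = yv n y m := by
  unfold yv
  by_cases h0 : m = 0
  · simp [h0]
  · rw [if_neg h0, if_neg h0]
    by_cases h : m - 1 < n
    · rw [dif_pos h, dif_pos h]
      congr 1
      exact hP ⟨m - 1, h⟩ (by simp; omega)
    · rw [dif_neg h, dif_neg h]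

lemma yv_succ (n : ℕ) (y : Fin n → Bool) (m : ℕ) (hm : m < n) :
    yv n y (m + 1) = sgn (y ⟨m, hm⟩) := by simp [yv, hm]

lemma yv_pos (n : ℕ) (y : Fin n → Bool) (k : ℕ) (h0 : k ≠ 0) (hk : k - 1 < n) :
    yv n y k = sgn (y ⟨k - 1, hk⟩) := by
  unfold yv; rw [if_neg h0, dif_pos hk]

lemma xv_eq (n : ℕ) (x : Fin n → Bool) (k : ℕ) (hk : k - 1 < n) :
    xv n x k = sgn (x ⟨k - 1, hk⟩) := by simp [xv, hk]

lemma xv_agree (n jj : ℕ) (x x' : Fin n → Bool)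
    (hP : ∀ t : Fin n, (t : ℕ) < jj → x' t = x t) (k : ℕ) (hk : k - 1 < jj) :
    xv n x' k = xv n x k := by
  unfold xv
  by_cases h : k - 1 < n
  · rw [dif_pos h, dif_pos h]
    congr 1
    exact hP ⟨k - 1, h⟩ (by simpa using hk)
  · rw [dif_neg h, dif_neg h]

lemma numA (n : ℕ) (ε : ℝ) (x y : Fin n → Bool) (j : ℕ) (hj : j < n) :
    (∑ y' : Fin n → Bool,
        if (∀ t : Fin n, (t : ℕ) < j → y' t = y t) then Fxy n ε x y' else 0)
    = (∑ y' : Fin n → Bool,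
        if (∀ t : Fin n, (t : ℕ) < j → y' t = y t) then (1 : ℝ) else 0)
      * (1 / 2 + 2 * ε * ((∑ k ∈ Finset.Icc 1 j,
          (yv n y (k - 1) * xv n x k + xv n x k * yv n y k)) + yv n y j * xv n x (j + 1))) := by
  set P : (Fin n → Bool) → Prop := fun y' => ∀ t : Fin n, (t : ℕ) < j → y' t = y t with hPdef
  set D := ∑ y' : Fin n → Bool, (if P y' then (1 : ℝ) else 0) with hD
  set t : ℕ → (Fin n → Bool) → ℝ := fun k y' =>
    yv n y' (k - 1) * xv n x k + xv n x k * yv n y' k with ht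
  have step1 : (∑ y' : Fin n → Bool, if P y' then Fxy n ε x y' else 0)
      = (1 / 2) * D + 2 * ε * ∑ k ∈ Finset.Icc 1 n,
          (∑ y' : Fin n → Bool, if P y' then t k y' else 0) := by
    have point : ∀ y' : Fin n → Bool, (if P y' then Fxy n ε x y' else 0)
        = (1 / 2) * (if P y' then (1 : ℝ) else 0)
          + ∑ k ∈ Finset.Icc 1 n, (2 * ε * (if P y' then t k y' else 0)) := by
      intro y'
      by_cases hp : P y'
      · simp only [if_pos hp, Fxy, ht, Finset.mul_sum]; ring
      · simp only [if_neg hp]; simp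
    rw [Finset.sum_congr rfl (fun y' _ => point y'), Finset.sum_add_distrib,
      Finset.sum_comm, ← Finset.mul_sum, hD]
    simp_rw [← Finset.mul_sum]
  rw [step1]
  have hA : ∀ k ∈ Finset.Ioc 0 j,
      (∑ y' : Fin n → Bool, if P y' then t k y' else 0) = t k y * D := by
    intro k hk
    rw [Finset.mem_Ioc] at hk
    rw [hD, Finset.mul_sum]
    apply Finset.sum_congr rfl
    intro y' _
    by_cases hp : P y'
    · rw [if_pos hp, if_pos hp, mul_one, ht]
      simp only
      rw [yv_agree n j y y' hp (k - 1) (by omega), yv_agree n j y y' hp k (by omega)]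
    · rw [if_neg hp, if_neg hp, mul_zero]
  have hB : (∑ y' : Fin n → Bool, if P y' then t (j + 1) y' else 0)
      = (yv n y j * xv n x (j + 1)) * D := by
    have key : ∀ y' : Fin n → Bool,
        (if P y' then t (j + 1) y' else 0)
        = (yv n y j * xv n x (j + 1)) * (if P y' then (1 : ℝ) else 0)
          + (if P y' then xv n x (j + 1) * sgn (y' ⟨j, hj⟩) else 0) := by
      intro y'
      by_cases hp : P y'
      · rw [if_pos hp, if_pos hp, if_pos hp, mul_one, ht]
        simp only [Nat.add_sub_cancel]
        rw [yv_agree n j y y' hp j le_rfl, yv_succ n y' j hj]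
      · rw [if_neg hp, if_neg hp, if_neg hp]; ring
    rw [Finset.sum_congr rfl (fun y' _ => key y'), Finset.sum_add_distrib,
      sum_agree_mul_sgn n j y ⟨j, hj⟩ le_rfl, ← Finset.mul_sum, hD]
    ring
  have hC : ∀ k ∈ Finset.Ioc (j + 1) n,
      (∑ y' : Fin n → Bool, if P y' then t k y' else 0) = 0 := by
    intro k hk
    rw [Finset.mem_Ioc] at hk
    have h2 : k - 1 - 1 < n := by omega
    have h1 : k - 1 < n := by omega
    have key : ∀ y' : Fin n → Bool,
        (if P y' then t k y' else 0)
        = (if P y' then xv n x k * sgn (y' ⟨k - 1 - 1, h2⟩) else 0)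
          + (if P y' then xv n x k * sgn (y' ⟨k - 1, h1⟩) else 0) := by
      intro y'
      by_cases hp : P y'
      · rw [if_pos hp, if_pos hp, if_pos hp, ht]
        simp only
        rw [yv_pos n y' (k - 1) (by omega) h2, yv_pos n y' k (by omega) h1]
        ring
      · rw [if_neg hp, if_neg hp, if_neg hp]; ring
    rw [Finset.sum_congr rfl (fun y' _ => key y'), Finset.sum_add_distrib,
      sum_agree_mul_sgn n j y ⟨k - 1 - 1, h2⟩ (by simp; omega),
      sum_agree_mul_sgn n j y ⟨k - 1, h1⟩ (by simp; omega)]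
    ring
  have hIcc : Finset.Icc 1 n = Finset.Ioc 0 n := by
    ext m; simp only [Finset.mem_Icc, Finset.mem_Ioc]; omega
  have hIcc' : Finset.Icc 1 j = Finset.Ioc 0 j := by
    ext m; simp only [Finset.mem_Icc, Finset.mem_Ioc]; omega
  have split1 : (∑ k ∈ Finset.Ioc 0 (j + 1),
        ∑ y' : Fin n → Bool, (if P y' then t k y' else 0))
      + ∑ k ∈ Finset.Ioc (j + 1) n, ∑ y' : Fin n → Bool, (if P y' then t k y' else 0)
      = ∑ k ∈ Finset.Ioc 0 n, ∑ y' : Fin n → Bool, (if P y' then t k y' else 0) :=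
    Finset.sum_Ioc_consecutive _ (by omega) (by omega)
  have split2 : (∑ k ∈ Finset.Ioc 0 j,
        ∑ y' : Fin n → Bool, (if P y' then t k y' else 0))
      + ∑ k ∈ Finset.Ioc j (j + 1), ∑ y' : Fin n → Bool, (if P y' then t k y' else 0)
      = ∑ k ∈ Finset.Ioc 0 (j + 1), ∑ y' : Fin n → Bool, (if P y' then t k y' else 0) :=
    Finset.sum_Ioc_consecutive _ (by omega) (by omega)
  have hsing : (∑ k ∈ Finset.Ioc j (j + 1),
        ∑ y' : Fin n → Bool, (if P y' then t k y' else 0))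
      = ∑ y' : Fin n → Bool, (if P y' then t (j + 1) y' else 0) := by
    have : Finset.Ioc j (j + 1) = {j + 1} := by
      ext m; simp only [Finset.mem_Ioc, Finset.mem_singleton]; omega
    rw [this, Finset.sum_singleton]
  rw [hIcc, ← split1, ← split2, hsing, hB,
    Finset.sum_congr rfl hA, Finset.sum_eq_zero hC, ← Finset.sum_mul, hIcc']
  simp only [ht]
  ring

lemma numB (n : ℕ) (ε : ℝ) (x y : Fin n → Bool) (j : ℕ) (hj : j < n) :
    (∑ x' : Fin n → Bool,
        if (∀ t : Fin n, (t : ℕ) < j + 1 → x' t = x t) then Fxy n ε x' y else 0)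
    = (∑ x' : Fin n → Bool,
        if (∀ t : Fin n, (t : ℕ) < j + 1 → x' t = x t) then (1 : ℝ) else 0)
      * (1 / 2 + 2 * ε * (∑ k ∈ Finset.Icc 1 (j + 1),
          (yv n y (k - 1) * xv n x k + xv n x k * yv n y k))) := by
  set P : (Fin n → Bool) → Prop := fun x' => ∀ t : Fin n, (t : ℕ) < j + 1 → x' t = x t with hPdef
  set D := ∑ x' : Fin n → Bool, (if P x' then (1 : ℝ) else 0) with hD
  set t : ℕ → (Fin n → Bool) → ℝ := fun k x' =>
    yv n y (k - 1) * xv n x' k + xv n x' k * yv n y k with ht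
  have step1 : (∑ x' : Fin n → Bool, if P x' then Fxy n ε x' y else 0)
      = (1 / 2) * D + 2 * ε * ∑ k ∈ Finset.Icc 1 n,
          (∑ x' : Fin n → Bool, if P x' then t k x' else 0) := by
    have point : ∀ x' : Fin n → Bool, (if P x' then Fxy n ε x' y else 0)
        = (1 / 2) * (if P x' then (1 : ℝ) else 0)
          + ∑ k ∈ Finset.Icc 1 n, (2 * ε * (if P x' then t k x' else 0)) := by
      intro x'
      by_cases hp : P x'
      · simp only [if_pos hp, Fxy, ht, Finset.mul_sum]; ring
      · simp only [if_neg hp]; simp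
    rw [Finset.sum_congr rfl (fun x' _ => point x'), Finset.sum_add_distrib,
      Finset.sum_comm, ← Finset.mul_sum, hD]
    simp_rw [← Finset.mul_sum]
  rw [step1]
  have hA : ∀ k ∈ Finset.Ioc 0 (j + 1),
      (∑ x' : Fin n → Bool, if P x' then t k x' else 0) = t k x * D := by
    intro k hk
    rw [Finset.mem_Ioc] at hk
    rw [hD, Finset.mul_sum]
    apply Finset.sum_congr rfl
    intro x' _
    by_cases hp : P x'
    · rw [if_pos hp, if_pos hp, mul_one, ht]
      simp only
      rw [xv_agree n (j + 1) x x' hp k (by omega)]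
    · rw [if_neg hp, if_neg hp, mul_zero]
  have hC : ∀ k ∈ Finset.Ioc (j + 1) n,
      (∑ x' : Fin n → Bool, if P x' then t k x' else 0) = 0 := by
    intro k hk
    rw [Finset.mem_Ioc] at hk
    have h1 : k - 1 < n := by omega
    have key : ∀ x' : Fin n → Bool,
        (if P x' then t k x' else 0)
        = (if P x' then (yv n y (k - 1) + yv n y k) * sgn (x' ⟨k - 1, h1⟩) else 0) := by
      intro x'
      by_cases hp : P x'
      · rw [if_pos hp, if_pos hp, ht]
        simp only
        rw [xv_eq n x' k h1]; ring
      · rw [if_neg hp, if_neg hp]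
    rw [Finset.sum_congr rfl (fun x' _ => key x'),
      sum_agree_mul_sgn n (j + 1) x ⟨k - 1, h1⟩ (by simp; omega)]
  have hIcc : Finset.Icc 1 n = Finset.Ioc 0 n := by
    ext m; simp only [Finset.mem_Icc, Finset.mem_Ioc]; omega
  have hIcc' : Finset.Icc 1 (j + 1) = Finset.Ioc 0 (j + 1) := by
    ext m; simp only [Finset.mem_Icc, Finset.mem_Ioc]; omega
  have split1 : (∑ k ∈ Finset.Ioc 0 (j + 1),
        ∑ x' : Fin n → Bool, (if P x' then t k x' else 0))
      + ∑ k ∈ Finset.Ioc (j + 1) n, ∑ x' : Fin n → Bool, (if P x' then t k x' else 0)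
      = ∑ k ∈ Finset.Ioc 0 n, ∑ x' : Fin n → Bool, (if P x' then t k x' else 0) :=
    Finset.sum_Ioc_consecutive _ (by omega) (by omega)
  rw [hIcc, ← split1, Finset.sum_congr rfl hA, Finset.sum_eq_zero hC,
    ← Finset.sum_mul, hIcc']
  simp only [ht]
  ring

theorem stmt_6 (n : ℕ) (hn : 1 ≤ n) (ε : ℝ) (hε : 0 < ε)
    (x y : Fin n → Bool) (j : ℕ) (hj : j < n) :
    condA n ε j x y =
      1 / 2 + 2 * ε * ((∑ k ∈ Finset.Icc 1 j,
          (yv n y (k - 1) * xv n x k + xv n x k * yv n y k)) + yv n y j * xv n x (j + 1)) ∧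
    condB n ε (j + 1) x y =
      1 / 2 + 2 * ε * (∑ k ∈ Finset.Icc 1 (j + 1),
          (yv n y (k - 1) * xv n x k + xv n x k * yv n y k)) ∧
    condB n ε (j + 1) x y - condA n ε j x y = 2 * ε * (xv n x (j + 1) * yv n y (j + 1)) ∧
    |condB n ε (j + 1) x y - condA n ε j x y| = 2 * ε := by
  have hDA := den_pos n j y
  have hDB := den_pos n (j + 1) x
  have ha : condA n ε j x y =
      1 / 2 + 2 * ε * ((∑ k ∈ Finset.Icc 1 j,
        (yv n y (k - 1) * xv n x k + xv n x k * yv n y k)) + yv n y j * xv n x (j + 1)) := by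
    unfold condA
    rw [numA n ε x y j hj, mul_div_cancel_left₀ _ (ne_of_gt hDA)]
  have hb : condB n ε (j + 1) x y =
      1 / 2 + 2 * ε * (∑ k ∈ Finset.Icc 1 (j + 1),
        (yv n y (k - 1) * xv n x k + xv n x k * yv n y k)) := by
    unfold condB
    rw [numB n ε x y j hj, mul_div_cancel_left₀ _ (ne_of_gt hDB)]
  have hc : condB n ε (j + 1) x y - condA n ε j x y
      = 2 * ε * (xv n x (j + 1) * yv n y (j + 1)) := by
    rw [ha, hb, Finset.sum_Icc_succ_top (by omega : 1 ≤ j + 1)]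
    simp only [Nat.add_sub_cancel]
    ring
  refine ⟨ha, hb, hc, ?_⟩
  rw [hc, abs_mul, abs_mul, abs_mul]
  have e1 : |xv n x (j + 1)| = 1 := by
    rw [xv_eq n x (j + 1) (by simpa using hj), abs_sgn]
  have e2 : |yv n y (j + 1)| = 1 := by
    rw [yv_pos n y (j + 1) (by omega) (by simpa using hj), abs_sgn]
  rw [e1, e2]
  rw [abs_of_nonneg (by norm_num : (0:ℝ) ≤ 2), abs_of_pos hε]
  ring
end

section
/- Let P, Q, R be partitions of Ω such that R refines Q and R refines the level-set partition Θ_P of E_P. Then ‖E_R‖₂² ≥ min(‖E_P‖₂², ‖E_Q‖₂²) + (1/4)·‖E_P − E_Q‖₂². (Thus when agent A, whose partition's level sets are Θ_P, announces its expectation to agent B with partition Q, agent B's new squared norm exceeds the smaller of the two old ones by at least a quarter of the squared L² distance between their expectations.) -/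
open scoped Classical BigOperators

variable {Ω : Type*} [Fintype Ω] [DecidableEq Ω]

lemma mem_cell_iff (S : FinPartition Ω) {ω ω' : Ω} :
    ω' ∈ S.cell ω ↔ S.cell ω' = S.cell ω :=
  ⟨S.cell_eq ω ω', fun h => h ▸ S.mem_cell ω'⟩

/-- Adjointness: if `h` is constant on the cells of `S`, then
`⟨E_S f, h⟩ = ⟨f, h⟩`. -/
lemma adjoint (μ f h : Ω → ℝ) (hμ : ∀ ω, 0 < μ ω) (S : FinPartition Ω)
    (hh : ∀ ω ω', ω' ∈ S.cell ω → h ω' = h ω) :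
    ∑ ω, μ ω * expOn μ f S ω * h ω = ∑ ω, μ ω * f ω * h ω := by
  classical
  have hmaps : ∀ x ∈ (Finset.univ : Finset Ω),
      S.cell x ∈ Finset.univ.image S.cell :=
    fun x _ => Finset.mem_image_of_mem _ (Finset.mem_univ x)
  rw [← Finset.sum_fiberwise_of_maps_to hmaps (fun ω => μ ω * expOn μ f S ω * h ω),
      ← Finset.sum_fiberwise_of_maps_to hmaps (fun ω => μ ω * f ω * h ω)]
  refine Finset.sum_congr rfl fun s hs => ?_
  obtain ⟨ω₀, -, rfl⟩ := Finset.mem_image.mp hs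
  have hfib : (Finset.univ.filter fun ω => S.cell ω = S.cell ω₀) = S.cell ω₀ := by
    ext ω; simp [mem_cell_iff]
  rw [hfib]
  have hsum_pos : 0 < ∑ ω ∈ S.cell ω₀, μ ω :=
    Finset.sum_pos (fun ω _ => hμ ω) ⟨ω₀, S.mem_cell ω₀⟩
  calc ∑ ω ∈ S.cell ω₀, μ ω * expOn μ f S ω * h ω
      = ∑ ω ∈ S.cell ω₀, μ ω * condExp μ f (S.cell ω₀) * h ω₀ := by
        refine Finset.sum_congr rfl fun ω hω => ?_
        rw [hh ω₀ ω hω, expOn, S.cell_eq ω₀ ω hω]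
    _ = (∑ ω ∈ S.cell ω₀, μ ω) * condExp μ f (S.cell ω₀) * h ω₀ := by
        rw [Finset.sum_mul, Finset.sum_mul]
    _ = (∑ ω ∈ S.cell ω₀, μ ω * f ω) * h ω₀ := by
        rw [condExp]; field_simp
    _ = ∑ ω ∈ S.cell ω₀, μ ω * f ω * h ω := by
        rw [Finset.sum_mul]
        exact Finset.sum_congr rfl fun ω hω => by rw [hh ω₀ ω hω]

theorem stmt_10 [Nonempty Ω] (μ f : Ω → ℝ)
    (hμpos : ∀ ω, 0 < μ ω) (hμsum : ∑ ω, μ ω = 1)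
    (P Q R : FinPartition Ω)
    (hRQ : R.Refines Q)
    (hRΘ : ∀ ω, R.cell ω ⊆ levelCell μ f P ω) :
    min (norm2 μ (expOn μ f P)) (norm2 μ (expOn μ f Q)) +
      (1 / 4) * norm2 μ (fun ω => expOn μ f P ω - expOn μ f Q ω) ≤
    norm2 μ (expOn μ f R) := by
  classical
  set a := expOn μ f P with ha_def
  set b := expOn μ f Q with hb_def
  set g := expOn μ f R with hg_def
  -- a is constant on cells of P, R; b on cells of Q, R
  have haP : ∀ ω ω', ω' ∈ P.cell ω → a ω' = a ω := fun ω ω' h => by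
    simp only [ha_def, expOn, P.cell_eq ω ω' h]
  have hbQ : ∀ ω ω', ω' ∈ Q.cell ω → b ω' = b ω := fun ω ω' h => by
    simp only [hb_def, expOn, Q.cell_eq ω ω' h]
  have haR : ∀ ω ω', ω' ∈ R.cell ω → a ω' = a ω := fun ω ω' h => by
    have := hRΘ ω h
    simp only [levelCell, Finset.mem_filter] at this
    exact this.2
  have hbR : ∀ ω ω', ω' ∈ R.cell ω → b ω' = b ω := fun ω ω' h =>
    hbQ ω ω' (hRQ ω h)
  -- inner products
  have h1 : ∑ ω, μ ω * a ω * a ω = ∑ ω, μ ω * f ω * a ω :=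
    adjoint μ f a hμpos P haP
  have h2 : ∑ ω, μ ω * b ω * b ω = ∑ ω, μ ω * f ω * b ω :=
    adjoint μ f b hμpos Q hbQ
  have h3 : ∑ ω, μ ω * g ω * a ω = ∑ ω, μ ω * f ω * a ω :=
    adjoint μ f a hμpos R haR
  have h4 : ∑ ω, μ ω * g ω * b ω = ∑ ω, μ ω * f ω * b ω :=
    adjoint μ f b hμpos R hbR
  -- Pythagoras
  have nga : norm2 μ (fun ω => g ω - a ω) = norm2 μ g - norm2 μ a := by
    have e : ∀ ω ∈ (Finset.univ : Finset Ω),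
        μ ω * (g ω - a ω) ^ 2 =
          μ ω * g ω ^ 2 - 2 * (μ ω * g ω * a ω) + μ ω * a ω * a ω := by
      intro ω _; ring
    simp only [norm2]
    rw [Finset.sum_congr rfl e, Finset.sum_add_distrib, Finset.sum_sub_distrib,
      ← Finset.mul_sum, h3, ← h1]
    have : ∀ ω ∈ (Finset.univ : Finset Ω), μ ω * a ω * a ω = μ ω * a ω ^ 2 :=
      fun ω _ => by ring
    rw [Finset.sum_congr rfl this]; ring
  have ngb : norm2 μ (fun ω => g ω - b ω) = norm2 μ g - norm2 μ b := by
    have e : ∀ ω ∈ (Finset.univ : Finset Ω),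
        μ ω * (g ω - b ω) ^ 2 =
          μ ω * g ω ^ 2 - 2 * (μ ω * g ω * b ω) + μ ω * b ω * b ω := by
      intro ω _; ring
    simp only [norm2]
    rw [Finset.sum_congr rfl e, Finset.sum_add_distrib, Finset.sum_sub_distrib,
      ← Finset.mul_sum, h4, ← h2]
    have : ∀ ω ∈ (Finset.univ : Finset Ω), μ ω * b ω * b ω = μ ω * b ω ^ 2 :=
      fun ω _ => by ring
    rw [Finset.sum_congr rfl this]; ring
  -- parallelogram-type pointwise bound
  have nab : norm2 μ (fun ω => a ω - b ω) ≤
      2 * norm2 μ (fun ω => g ω - a ω) + 2 * norm2 μ (fun ω => g ω - b ω) := by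
    simp only [norm2, Finset.mul_sum, ← Finset.sum_add_distrib]
    refine Finset.sum_le_sum fun ω _ => ?_
    have hμ := (hμpos ω).le
    nlinarith [sq_nonneg (g ω - a ω + (g ω - b ω)), sq_nonneg (g ω - a ω - (g ω - b ω))]
  have hga0 : 0 ≤ norm2 μ (fun ω => g ω - a ω) :=
    Finset.sum_nonneg fun ω _ => mul_nonneg (hμpos ω).le (sq_nonneg _)
  have hgb0 : 0 ≤ norm2 μ (fun ω => g ω - b ω) :=
    Finset.sum_nonneg fun ω _ => mul_nonneg (hμpos ω).le (sq_nonneg _)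
  rcases min_le_iff.mpr (Or.inl (le_refl (norm2 μ a))) with _
  have hmin : min (norm2 μ a) (norm2 μ b) ≤ (norm2 μ a + norm2 μ b) / 2 := by
    rcases min_cases (norm2 μ a) (norm2 μ b) with ⟨h, hle⟩ | ⟨h, hle⟩ <;> rw [h] <;> linarith
  linarith [nab, nga, ngb, hga0, hgb0, hmin]
end

section
/- Let p₁,…,p_n ∈ [0,1] and x₁,…,x_n ∈ [0,1], let P = p₁+⋯+p_n > 0 and X = p₁x₁+⋯+p_nx_n. Choose K indices i(1),…,i(K) independently and uniformly at random from {1,…,n}. Then for every α ∈ (0,1], Pr[ |(p_{i(1)}x_{i(1)}+⋯+p_{i(K)}x_{i(K)})/(p_{i(1)}+⋯+p_{i(K)}) − X/P| > α ] ≤ 4·exp(−α²·(P/n)²·K/2), where the ratio is interpreted as 0 when its denominator is 0. -/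
/-!
Fix the threshold `c = X/P + α`. The sampled ratio exceeds `X/P + α` only if
`∑_j p_{i(j)} (x_{i(j)} - c) ≥ 0`, a sum of `K` i.i.d. terms with values in an interval of length 2
and mean `-α P / n`; Hoeffding's inequality bounds the probability of this by
`exp(-(α P / n)² K / 2)`. The lower deviation is the upper one for the numbers `1 - x_i`.
-/

open MeasureTheory ProbabilityTheory Real Finset

section

variable {ι : Type*} [Fintype ι]

lemma integral_uniformOn_univ [MeasurableSpace ι] [DiscreteMeasurableSpace ι] (W : ι → ℝ) :
    (uniformOn (Set.univ : Set ι))[W] = (∑ i, W i) / Fintype.card ι := by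
  rw [integral_fintype .of_finite]
  simp [measureReal_def, uniformOn_univ, div_eq_inv_mul, Finset.mul_sum]

lemma measureReal_uniformOn_univ {Ω : Type*} [Fintype Ω] [MeasurableSpace Ω]
    [MeasurableSingletonClass Ω] (P : Ω → Prop) [DecidablePred P] :
    (uniformOn (Set.univ : Set Ω)).real {ω | P ω} = #{ω | P ω} / Fintype.card Ω := by
  rw [measureReal_def, uniformOn_univ, ← coe_filter_univ, Measure.count_apply_finset,
    ENNReal.toReal_div]
  simp

theorem measureReal_sum_sub_mean_ge_le [Nonempty ι] [MeasurableSpace ι]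
    [DiscreteMeasurableSpace ι] (K : ℕ) {W : ι → ℝ} {a b : ℝ}
    (hW : ∀ i, W i ∈ Set.Icc a b) {ε : ℝ} (hε : 0 ≤ ε) :
    (uniformOn Set.univ : Measure (Fin K → ι)).real
        {ω | ε ≤ ∑ j, (W (ω j) - (∑ i, W i) / Fintype.card ι)}
      ≤ exp (-2 * ε ^ 2 / (K * (b - a) ^ 2)) := by
  set μ₁ : Measure ι := uniformOn Set.univ
  have hsub : HasSubgaussianMGF (fun i ↦ W i - μ₁[W]) ((‖b - a‖₊ / 2) ^ 2) μ₁ :=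
    hasSubgaussianMGF_of_mem_Icc .of_discrete (ae_of_all _ hW)
  rw [integral_uniformOn_univ] at hsub
  rw [← Set.pi_univ Set.univ, uniformOn_pi]
  have hind := iIndepFun_pi (μ := fun _ : Fin K ↦ μ₁)
    (X := fun _ i ↦ W i - (∑ i, W i) / Fintype.card ι) (fun _ ↦ .of_discrete)
  refine (HasSubgaussianMGF.measure_sum_ge_le_of_iIndepFun hind (s := univ)
    (c := fun _ ↦ (‖b - a‖₊ / 2) ^ 2) (fun j _ ↦ ?_) hε).trans_eq ?_
  · have hj := measurePreserving_eval (fun _ : Fin K ↦ μ₁) j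
    rw [← hj.map_eq] at hsub
    exact hsub.of_map hj.aemeasurable
  · simp only [sum_const, card_univ, Fintype.card_fin, nsmul_eq_mul, NNReal.coe_mul,
      NNReal.coe_natCast, NNReal.coe_pow, NNReal.coe_div, coe_nnnorm, Real.norm_eq_abs,
      NNReal.coe_ofNat]
    rw [div_pow, sq_abs, show 2 * (K * ((b - a) ^ 2 / 2 ^ 2)) = K * (b - a) ^ 2 / 2 by ring,
      div_div_eq_mul_div]
    ring_nf

theorem card_sum_sub_mean_ge_le [Nonempty ι] (K : ℕ) {W : ι → ℝ} {a b : ℝ}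
    (hW : ∀ i, W i ∈ Set.Icc a b) {ε : ℝ} (hε : 0 ≤ ε) :
    (#{ω : Fin K → ι | ε ≤ ∑ j, (W (ω j) - (∑ i, W i) / Fintype.card ι)} : ℝ)
        / Fintype.card ι ^ K
      ≤ exp (-2 * ε ^ 2 / (K * (b - a) ^ 2)) := by
  let _ : MeasurableSpace ι := ⊤
  have h := measureReal_sum_sub_mean_ge_le K hW hε
  rwa [measureReal_uniformOn_univ, Fintype.card_fun, Fintype.card_fin, Nat.cast_pow] at h

theorem card_sum_nonneg_le_of_mean_le [Nonempty ι] (K : ℕ) {W : ι → ℝ} {a b : ℝ}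
    (hW : ∀ i, W i ∈ Set.Icc a b) {δ : ℝ} (hδ : 0 ≤ δ)
    (hmean : (∑ i, W i) / Fintype.card ι ≤ -δ) :
    (#{ω : Fin K → ι | 0 ≤ ∑ j, W (ω j)} : ℝ) / Fintype.card ι ^ K
      ≤ exp (-2 * K * δ ^ 2 / (b - a) ^ 2) := by
  have hsub : (#{ω : Fin K → ι | 0 ≤ ∑ j, W (ω j)} : ℝ)
      ≤ #{ω : Fin K → ι | K * δ ≤ ∑ j, (W (ω j) - (∑ i, W i) / Fintype.card ι)} := by
    refine Nat.mono_cast (card_le_card (monotone_filter_right _ fun ω _ hω ↦ ?_))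
    rw [sum_sub_distrib, sum_const, card_univ, Fintype.card_fin, nsmul_eq_mul]
    nlinarith [mul_le_mul_of_nonneg_left hmean (Nat.cast_nonneg K : (0 : ℝ) ≤ K)]
  calc (#{ω : Fin K → ι | 0 ≤ ∑ j, W (ω j)} : ℝ) / Fintype.card ι ^ K
      ≤ (#{ω : Fin K → ι | K * δ ≤ ∑ j, (W (ω j) - (∑ i, W i) / Fintype.card ι)} : ℝ)
          / Fintype.card ι ^ K := by gcongr
    _ ≤ exp (-2 * (K * δ) ^ 2 / (K * (b - a) ^ 2)) :=
        card_sum_sub_mean_ge_le K hW (by positivity)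
    _ = exp (-2 * K * δ ^ 2 / (b - a) ^ 2) := by
        rcases eq_or_ne (K : ℝ) 0 with hK | hK
        · simp [hK]
        · rw [mul_pow, sq (K : ℝ), mul_assoc (K : ℝ), mul_left_comm, mul_div_mul_left _ _ hK]
          ring_nf

/-- For `z = 0` the ratio is the junk value `0` and the second alternative holds trivially. -/
lemma nonneg_or_nonneg_of_lt_abs_div_sub {y z r α : ℝ} (hz : 0 ≤ z) (hyz : y ≤ z)
    (h : α < |y / z - r|) :
    0 ≤ y - z * (r + α) ∨ 0 ≤ z - y - z * (1 - r + α) := by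
  rcases hz.eq_or_lt with rfl | hz
  · right; linarith
  rcases lt_abs.1 h with h | h
  · left
    have := (lt_div_iff₀ hz).1 (by linarith : r + α < y / z)
    linarith
  · right
    have := (div_lt_iff₀ hz).1 (by linarith : y / z < r - α)
    linarith

theorem card_upperTail_weightedMean_le (K : ℕ) {p x : ι → ℝ}
    (hp : ∀ i, p i ∈ Set.Icc (0 : ℝ) 1) (hx : ∀ i, x i ∈ Set.Icc (0 : ℝ) 1)
    (hP : 0 < ∑ i, p i) {α : ℝ} (hα₀ : 0 ≤ α) (hα₁ : α ≤ 1) :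
    (#{ω : Fin K → ι |
        0 ≤ ∑ j, p (ω j) * (x (ω j) - ((∑ i, p i * x i) / ∑ i, p i + α))} : ℝ)
        / Fintype.card ι ^ K
      ≤ exp (-(α ^ 2 * ((∑ i, p i) / Fintype.card ι) ^ 2 * K / 2)) := by
  obtain ⟨i₀, -, -⟩ := exists_ne_zero_of_sum_ne_zero hP.ne'
  have : Nonempty ι := ⟨i₀⟩
  set P := ∑ i, p i
  set X := ∑ i, p i * x i
  set c := X / P + α
  have hXP : X ≤ P := sum_le_sum fun i _ ↦ mul_le_of_le_one_right (hp i).1 (hx i).2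
  have hX : 0 ≤ X := sum_nonneg fun i _ ↦ mul_nonneg (hp i).1 (hx i).1
  have hc₀ : 0 ≤ c := by positivity
  have hc₂ : c ≤ 2 := by linarith [(div_le_one hP).2 hXP]
  have hW : ∀ i, p i * (x i - c) ∈ Set.Icc (-c) (-c + 2) := fun i ↦ by
    obtain ⟨hp₀, hp₁⟩ := hp i
    obtain ⟨hx₀, hx₁⟩ := hx i
    constructor <;> nlinarith [mul_nonneg hp₀ hx₀, mul_nonneg hc₀ (sub_nonneg.2 hp₁),
      mul_le_mul hp₁ hx₁ hx₀ zero_le_one, mul_nonneg (sub_nonneg.2 hc₂) (sub_nonneg.2 hp₁)]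
  have hmean : (∑ i, p i * (x i - c)) / Fintype.card ι = -(α * P / Fintype.card ι) := by
    simp only [mul_sub, sum_sub_distrib, ← sum_mul, c]
    field_simp
    ring
  refine (card_sum_nonneg_le_of_mean_le K hW (by positivity) hmean.le).trans_eq ?_
  congr 1
  ring

end

theorem stmt_12_general (n K : ℕ)
    (p x : Fin n → ℝ)
    (hp : ∀ i, p i ∈ Set.Icc (0 : ℝ) 1) (hx : ∀ i, x i ∈ Set.Icc (0 : ℝ) 1)
    (hP : 0 < ∑ i, p i)
    (α : ℝ) (hα : α ∈ Set.Ioc (0 : ℝ) 1) :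
    (∑ idx : Fin K → Fin n,
        if α < |(∑ j, p (idx j) * x (idx j)) / (∑ j, p (idx j)) -
                (∑ i, p i * x i) / (∑ i, p i)|
        then (1 : ℝ) else 0) / (n : ℝ) ^ K
      ≤ 4 * Real.exp (-(α ^ 2 * ((∑ i, p i) / n) ^ 2 * K / 2)) := by
  set r := (∑ i, p i * x i) / ∑ i, p i
  have hx' : ∀ i, 1 - x i ∈ Set.Icc (0 : ℝ) 1 := fun i ↦
    ⟨sub_nonneg.2 (hx i).2, sub_le_self _ (hx i).1⟩
  have hr' : (∑ i, p i * (1 - x i)) / ∑ i, p i = 1 - r := by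
    simp only [mul_one_sub, sum_sub_distrib, sub_div, div_self hP.ne', r]
  have hupper := card_upperTail_weightedMean_le K hp hx hP hα.1.le hα.2
  have hlower := card_upperTail_weightedMean_le K hp hx' hP hα.1.le hα.2
  rw [hr', Fintype.card_fin] at hlower
  rw [Fintype.card_fin] at hupper
  have hcount :
      (#{ω : Fin K → Fin n | α < |(∑ j, p (ω j) * x (ω j)) / (∑ j, p (ω j)) - r|} : ℝ)
      ≤ #{ω : Fin K → Fin n | 0 ≤ ∑ j, p (ω j) * (x (ω j) - (r + α))}
        + #{ω : Fin K → Fin n | 0 ≤ ∑ j, p (ω j) * (1 - x (ω j) - (1 - r + α))} := by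
    norm_cast
    refine (card_le_card fun ω hω ↦ ?_).trans (card_union_le _ _)
    simp only [mem_filter, mem_univ, true_and, mem_union, mul_sub, mul_one, sum_sub_distrib,
      ← sum_mul] at hω ⊢
    exact nonneg_or_nonneg_of_lt_abs_div_sub (sum_nonneg fun j _ ↦ (hp _).1)
      (sum_le_sum fun j _ ↦ mul_le_of_le_one_right (hp _).1 (hx _).2) hω
  have hfrac := div_le_div_of_nonneg_right hcount (by positivity : (0 : ℝ) ≤ n ^ K)
  rw [add_div] at hfrac
  rw [sum_boole]
  linarith [exp_pos (-(α ^ 2 * ((∑ i, p i) / n) ^ 2 * K / 2))]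

/-- a Chernoff–Hoeffding corollary: estimating a `p`-weighted average
`X/P` of numbers `x_i ∈ [0,1]` by the weighted average over `K` uniformly random
sampled indices, the probability of an error larger than `α` is at most
`4 exp(-α² (P/n)² K / 2)`.  (A ratio with zero denominator is interpreted as `0`.) -/
theorem stmt_12 (n K : ℕ) (hn : 0 < n)
    (p x : Fin n → ℝ)
    (hp : ∀ i, p i ∈ Set.Icc (0 : ℝ) 1) (hx : ∀ i, x i ∈ Set.Icc (0 : ℝ) 1)
    (hP : 0 < ∑ i, p i)
    (α : ℝ) (hα : α ∈ Set.Ioc (0 : ℝ) 1) :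
    (∑ idx : Fin K → Fin n,
        if α < |(∑ j, p (idx j) * x (idx j)) / (∑ j, p (idx j)) -
                (∑ i, p i * x i) / (∑ i, p i)|
        then (1 : ℝ) else 0) / (n : ℝ) ^ K
      ≤ 4 * Real.exp (-(α ^ 2 * ((∑ i, p i) / n) ^ 2 * K / 2)) :=
  stmt_12_general n K p x hp hx hP α hα
end

section
/- Let L be a positive integer and define the triangular distribution p on ℤ by p_j = (L − |j|)/L² for |j| ≤ L and p_j = 0 otherwise (so Σ_j p_j = 1). Then for every nonnegative integer s, the total variation distance between p and its shift by s satisfies (1/2)·Σ_{j∈ℤ} |p_j − p_{j−s}| ≤ s/L. (Hence in the smoothed standard protocol, two messages generated from rounded expectations differing by ∂ yield message distributions at total variation distance at most ∂/ϵ, where ∂ is a multiple of the grid spacing 2^{−b} and L·2^{−b} = ϵ.) -/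
/-!
Shifting by `s` is `s` successive shifts by one, so by the triangle inequality the `ℓ¹` distance
between `p` and its shift by `s` is at most `s` times the total variation `∑ |p_j - p_{j-1}|`.
The triangular profile `j ↦ max (L - |j|) 0` is `1`-Lipschitz and is nonconstant only on the
`2L` steps from `-L` to `L`, so that total variation is at most `2L / L² = 2 / L`.
-/

/-- The triangular distribution on `ℤ` with parameter `L`: `p_j = (L - |j|)/L²` for
`|j| ≤ L` and `p_j = 0` otherwise. -/
noncomputable def triZ (L : ℕ) (j : ℤ) : ℝ :=
  if |j| ≤ (L : ℤ) then ((L : ℝ) - |(j : ℝ)|) / (L : ℝ) ^ 2 else 0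

section ShiftVariation

variable {f : ℤ → ℝ}

lemma Summable.abs_sub_comp_sub (hf : Summable f) (s : ℤ) :
    Summable fun j => |f j - f (j - s)| :=
  (hf.sub ((Equiv.subRight s).summable_iff.mpr hf)).abs

theorem tsum_abs_sub_comp_sub_le (hf : Summable f) (s : ℕ) :
    ∑' j, |f j - f (j - s)| ≤ s * ∑' j, |f j - f (j - 1)| := by
  induction s with
  | zero => simp
  | succ s ih =>
    have hshift : ∑' j, |f (j - s) - f (j - s - 1)| = ∑' j, |f j - f (j - 1)| :=
      (Equiv.subRight (s : ℤ)).tsum_eq fun j => |f j - f (j - 1)|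
    have hstep : Summable fun j => |f (j - s) - f (j - s - 1)| :=
      (Equiv.subRight (s : ℤ)).summable_iff.mpr (hf.abs_sub_comp_sub 1)
    calc ∑' j, |f j - f (j - (s + 1 : ℕ))|
        ≤ ∑' j, (|f j - f (j - s)| + |f (j - s) - f (j - s - 1)|) := by
          refine Summable.tsum_le_tsum (fun j => ?_) (hf.abs_sub_comp_sub _)
            ((hf.abs_sub_comp_sub _).add hstep)
          rw [Nat.cast_succ, ← sub_sub]
          exact abs_sub_le _ _ _
      _ = ∑' j, |f j - f (j - s)| + ∑' j, |f j - f (j - 1)| := by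
          rw [(hf.abs_sub_comp_sub _).tsum_add hstep, hshift]
      _ ≤ (s + 1 : ℕ) * ∑' j, |f j - f (j - 1)| := by
          push_cast
          linarith

end ShiftVariation

namespace triZ

lemma eq_max (L : ℕ) (j : ℤ) : triZ L j = max ((L : ℝ) - |(j : ℝ)|) 0 / (L : ℝ) ^ 2 := by
  have hcast : |(j : ℝ)| = ((|j| : ℤ) : ℝ) := (Int.cast_abs).symm
  unfold triZ
  split_ifs with h
  · rw [max_eq_left (by rw [hcast, sub_nonneg]; exact_mod_cast h)]
  · rw [max_eq_right (by rw [hcast, sub_nonpos]; exact_mod_cast (not_le.mp h).le), zero_div]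

lemma eq_zero_of_le_abs {L : ℕ} {j : ℤ} (h : (L : ℤ) ≤ |j|) : triZ L j = 0 := by
  have hLj : (L : ℝ) ≤ |(j : ℝ)| := by rw [← Int.cast_abs]; exact_mod_cast h
  rw [eq_max, max_eq_right (sub_nonpos.mpr hLj), zero_div]

lemma summable (L : ℕ) : Summable (triZ L) :=
  summable_of_ne_finset_zero (s := Finset.Icc (-(L : ℤ)) L) fun j hj =>
    eq_zero_of_le_abs (by rw [Finset.mem_Icc] at hj; rw [abs_eq_max_neg]; omega)

lemma abs_sub_sub_one_le (L : ℕ) (j : ℤ) :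
    |triZ L j - triZ L (j - 1)| ≤ 1 / (L : ℝ) ^ 2 := by
  rw [eq_max, eq_max, ← sub_div, abs_div, abs_of_nonneg (sq_nonneg (L : ℝ))]
  gcongr
  calc |max ((L : ℝ) - |(j : ℝ)|) 0 - max ((L : ℝ) - |((j - 1 : ℤ) : ℝ)|) 0|
      ≤ |((L : ℝ) - |(j : ℝ)|) - ((L : ℝ) - |((j - 1 : ℤ) : ℝ)|)| := abs_max_sub_max_le_abs _ _ _
    _ = |(|((j - 1 : ℤ) : ℝ)| - |(j : ℝ)|)| := by ring_nf
    _ ≤ |((j - 1 : ℤ) : ℝ) - j| := abs_abs_sub_abs_le_abs_sub _ _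
    _ = 1 := by push_cast; norm_num

lemma sub_sub_one_eq_zero {L : ℕ} {j : ℤ} (h : j ∉ Finset.Icc (-(L : ℤ) + 1) L) :
    triZ L j - triZ L (j - 1) = 0 := by
  rw [Finset.mem_Icc] at h
  rw [eq_zero_of_le_abs (by rw [abs_eq_max_neg]; omega),
    eq_zero_of_le_abs (by rw [abs_eq_max_neg]; omega), sub_zero]

theorem tsum_abs_sub_sub_one_le (L : ℕ) :
    ∑' j, |triZ L j - triZ L (j - 1)| ≤ 2 / L := by
  rw [tsum_eq_sum (s := Finset.Icc (-(L : ℤ) + 1) L) fun j hj => by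
    rw [sub_sub_one_eq_zero hj, abs_zero]]
  calc ∑ j ∈ Finset.Icc (-(L : ℤ) + 1) L, |triZ L j - triZ L (j - 1)|
      ≤ (Finset.Icc (-(L : ℤ) + 1) L).card • (1 / (L : ℝ) ^ 2) :=
        Finset.sum_le_card_nsmul _ _ _ fun j _ => abs_sub_sub_one_le L j
    _ = 2 * L / (L : ℝ) ^ 2 := by
        rw [Int.card_Icc, nsmul_eq_mul, show ((L : ℤ) + 1 - (-(L : ℤ) + 1)).toNat = 2 * L by omega]
        push_cast
        ring
    _ = 2 / L := by
        rcases eq_or_ne (L : ℝ) 0 with hL | hL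
        · simp [hL]
        · field_simp

end triZ

theorem stmt_19_general (L : ℕ) (s : ℕ) :
    (1 / 2) * ∑' j : ℤ, |triZ L j - triZ L (j - (s : ℤ))| ≤ (s : ℝ) / L := by
  calc (1 / 2) * ∑' j : ℤ, |triZ L j - triZ L (j - (s : ℤ))|
      ≤ (1 / 2) * (s * (2 / L)) := by
        gcongr
        exact (tsum_abs_sub_comp_sub_le (triZ.summable L) s).trans
          (mul_le_mul_of_nonneg_left (triZ.tsum_abs_sub_sub_one_le L) s.cast_nonneg)
    _ = s / L := by ring

/-- the total variation distance between the triangular distribution on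
`{-L,…,L}` and its shift by `s` is at most `s/L`. -/
theorem stmt_19 (L : ℕ) (hL : 0 < L) (s : ℕ) :
    (1 / 2) * ∑' j : ℤ, |triZ L j - triZ L (j - (s : ℤ))| ≤ (s : ℝ) / L :=
  stmt_19_general L s
end
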